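/- Suppose T_i has the pony-tail, rpl(T_{i+1}) = 1, T_i is copying T_{i+1} at level 1, and T_{i+1} is copying T_i at level 2. Then C(T_i,2) can be derived from C(T_{i+1},2) by deleting a leaf and appending a leaf. -/
import Mathlib


/-- An ordered (plane) tree: a root together with the list of subtrees of its
children.  The children are listed **rightmost first** (so the head of the
list is the rightmost child). -/
inductive OTree : Type
  | node : List OTree → OTree

namespace OTree

-- Number of vertices of an ordered tree.
mutual
  def size : OTree → ℕ
    | .node ts => 1 + sizeAux ts
  def sizeAux : List OTree → ℕ
    | [] => 0
    | t :: ts => size t + sizeAux ts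
end

/-- `rpl T` is the number of edges of the rightmost path of `T`
(the path from the root that always follows the rightmost child). -/
def rpl : OTree → ℕ
  | .node [] => 0
  | .node (t :: _) => 1 + rpl t

/-- `p T` removes the rightmost leaf of `T` (the endpoint of the rightmost
path).  On the one-vertex tree it is the identity (junk value). -/
def p : OTree → OTree
  | .node [] => .node []
  | .node (.node [] :: ts) => .node ts
  | .node (.node (c :: cs) :: ts) => .node (p (.node (c :: cs)) :: ts)

/-- `C T i` appends a new leaf as the rightmost child of the vertex at
level `i` on the rightmost path of `T` (the root has level 1).
Junk values are returned when `i = 0` or `i` exceeds `rpl T + 1`. -/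
def C : OTree → ℕ → OTree
  | t, 0 => t
  | .node ts, 1 => .node (.node [] :: ts)
  | .node [], _ + 2 => .node []
  | .node (t :: ts), n + 2 => .node (C t (n + 1) :: ts)

/-- The number of children of the parent of the rightmost leaf
(junk value `0` on the one-vertex tree, which has no such parent). -/
def rmlParentDeg : OTree → ℕ
  | .node [] => 0
  | .node (.node [] :: ts) => ts.length + 1
  | .node (.node (c :: cs) :: _) => rmlParentDeg (.node (c :: cs))

/-- `T` has the pony-tail if the rightmost child of the root has exactly one
child, which is a leaf. -/
def ponyTail : OTree → Prop
  | .node (.node [.node []] :: _) => True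
  | _ => False

end OTree

/-- `AppendLeaf T T'` holds when `T'` is obtained from `T` by attaching one
new leaf to some vertex of `T`, at some position among its children. -/
inductive AppendLeaf : OTree → OTree → Prop
  | root (l r : List OTree) :
      AppendLeaf (.node (l ++ r)) (.node (l ++ OTree.node [] :: r))
  | child (l r : List OTree) (t t' : OTree) :
      AppendLeaf t t' → AppendLeaf (.node (l ++ t :: r)) (.node (l ++ t' :: r))

/-- `DelApp T T'` holds when `T'` can be obtained from `T` by deleting one
leaf and then appending one new leaf somewhere (delete-and-append a leaf). -/
def DelApp (T T' : OTree) : Prop :=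
  ∃ S : OTree, AppendLeaf S T ∧ AppendLeaf S T'

/-- `CopyingAt T T' j` : `T` is copying `T'` at level `j`, i.e. `T'` is
obtained from `T` by appending a new leaf which becomes the rightmost leaf of
`T'` (namely forming `C T j`, whose rightmost path has `j` edges) and then
removing some other leaf. -/
def CopyingAt (T T' : OTree) (j : ℕ) : Prop :=
  T ≠ T' ∧ 1 ≤ j ∧ j ≤ T.rpl + 1 ∧ T'.rpl = j ∧ AppendLeaf T' (T.C j)

/-- `T` is copying `T'`. -/
def Copying (T T' : OTree) : Prop := ∃ j : ℕ, CopyingAt T T' j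


/-- Suppose `T₁` has the pony-tail, `rpl T₂ = 1`, `T₁` is copying `T₂` at
level 1, and `T₂` is copying `T₁` at level 2.  Then `C T₁ 2` can be derived
from `C T₂ 2` by deleting a leaf and appending a leaf. -/
theorem stmt_16 (T₁ T₂ : OTree) (hpt : T₁.ponyTail) (h2 : T₂.rpl = 1)
    (hcopy1 : CopyingAt T₁ T₂ 1) (hcopy2 : CopyingAt T₂ T₁ 2) :
    DelApp (T₂.C 2) (T₁.C 2) := by
  obtain ⟨-, -, -, -, hA⟩ := hcopy2
  refine ⟨T₁, hA, ?_⟩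
  obtain ⟨cs⟩ := T₁
  match cs, hpt with
  | (OTree.node [OTree.node []]) :: ts, _ =>
    have : OTree.C (.node (.node [.node []] :: ts)) 2
        = .node (.node [.node [], .node []] :: ts) := rfl
    rw [this]
    exact AppendLeaf.child [] ts _ _ (AppendLeaf.root [] [.node []])
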